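/- Let P_l and P_u be Borel probability measures on ℝ^d with finite second moments, and let X^l ~ P_l, X^u ~ P_u, and λ be mutually independent random variables, where λ is distributed according to the Beta distribution β(α, α) on [0,1] for some α > 0. Let P̃ be the law of the interpolated sample x̃ = λ·X^l + (1−λ)·X^u. Define the euclidean generalized energy distance between probability measures P, Q (with independent X, X' ~ P and Y, Y' ~ Q, all mutually independent) by J²(P, Q) = 2·E[‖X − Y‖²] − E[‖X − X'‖²] − E[‖Y − Y'‖²], where ‖·‖ is the euclidean norm. Then J²(P̃, P_u) = (1/4)·J²(P_l, P_u). -/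

import Mathlib

/-!
Expanding the squares, `J²(P, Q) = 2 ‖E P - E Q‖²` as soon as both measures have second
moments: the cross terms factor by independence, and the second moments cancel. Independence of
`λ` from `(X^l, X^u)` gives `E x̃ = E λ · E X^l + (1 - E λ) · E X^u`, and `E λ = 1/2` because
`β(α, α)` is invariant under `x ↦ 1 - x`. Hence `E x̃ - E X^u = (E X^l - E X^u) / 2`, and the
energy distance is divided by four.
-/

open MeasureTheory ProbabilityTheory

/-- The Beta(α, α) probability measure on `[0,1]`, given by its density
`Γ(2α)/(Γ(α)Γ(α)) · x^(α−1) (1−x)^(α−1)` with respect to Lebesgue measure on `[0,1]`. -/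
noncomputable def betaMeasure (α : ℝ) : Measure ℝ :=
  (volume.restrict (Set.Icc (0 : ℝ) 1)).withDensity
    (fun x => ENNReal.ofReal
      (Real.Gamma (2 * α) / (Real.Gamma α * Real.Gamma α) * x ^ (α - 1) * (1 - x) ^ (α - 1)))

/-- The euclidean generalized energy distance (with squared euclidean distances) between two
probability measures `P, Q` on `ℝ^d`:
`J²(P, Q) = 2 E[‖X − Y‖²] − E[‖X − X'‖²] − E[‖Y − Y'‖²]`, where `X, X' ~ P`, `Y, Y' ~ Q`
are mutually independent. -/
noncomputable def energyDistSq {d : ℕ} (P Q : Measure (EuclideanSpace ℝ (Fin d))) : ℝ :=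
  2 * (∫ p, ‖p.1 - p.2‖ ^ 2 ∂(P.prod Q))
    - (∫ p, ‖p.1 - p.2‖ ^ 2 ∂(P.prod P))
    - (∫ p, ‖p.1 - p.2‖ ^ 2 ∂(Q.prod Q))

open scoped InnerProductSpace

lemma integral_id_map {Ω E : Type*} [MeasurableSpace Ω] [NormedAddCommGroup E]
    [NormedSpace ℝ E] [MeasurableSpace E] [OpensMeasurableSpace E] [SecondCountableTopology E]
    {μ : Measure Ω} {Z : Ω → E} (hZ : AEMeasurable Z μ) : ∫ x, x ∂(μ.map Z) = ∫ ω, Z ω ∂μ :=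
  integral_map hZ aestronglyMeasurable_id

lemma integral_id_eq_half_of_map_one_sub_eq {μ : Measure ℝ} [IsProbabilityMeasure μ]
    (hsymm : μ.map (fun x => 1 - x) = μ) (hint : Integrable (fun x => x) μ) :
    ∫ x, x ∂μ = 1 / 2 := by
  have h : ∫ x, (1 - x) ∂μ = ∫ x, x ∂μ := by
    rw [← integral_id_map (by fun_prop : AEMeasurable (fun x : ℝ => 1 - x) μ), hsymm]
  rw [integral_sub (integrable_const 1) hint, integral_const, probReal_univ, one_smul] at h
  linarith

lemma betaMeasure_map_one_sub (α : ℝ) :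
    (_root_.betaMeasure α).map (fun x => 1 - x) = _root_.betaMeasure α := by
  set f : ℝ → ENNReal := fun x => ENNReal.ofReal
      (Real.Gamma (2 * α) / (Real.Gamma α * Real.Gamma α) * x ^ (α - 1) * (1 - x) ^ (α - 1))
  have hf_symm : ∀ x, f (1 - x) = f x := fun x => by
    simp only [f, sub_sub_cancel, mul_right_comm]
  have hpres : MeasurePreserving (fun x : ℝ => 1 - x) := volume.measurePreserving_sub_left 1
  have hIcc : (fun x : ℝ => 1 - x) ⁻¹' Set.Icc 0 1 = Set.Icc 0 1 := by
    simp [Set.preimage_const_sub_Icc]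
  ext s hs
  have hs' : MeasurableSet ((fun x : ℝ => 1 - x) ⁻¹' s) := hs.preimage (by fun_prop)
  rw [Measure.map_apply (by fun_prop) hs, _root_.betaMeasure, withDensity_apply _ hs',
    withDensity_apply _ hs, Measure.restrict_restrict hs', Measure.restrict_restrict hs]
  calc ∫⁻ x in (fun x : ℝ => 1 - x) ⁻¹' s ∩ Set.Icc 0 1, f x
      = ∫⁻ x in (fun x : ℝ => 1 - x) ⁻¹' (s ∩ Set.Icc 0 1), f (1 - x) := by
        rw [Set.preimage_inter, hIcc]; simp only [hf_symm]
    _ = ∫⁻ x in s ∩ Set.Icc 0 1, f x :=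
        hpres.setLIntegral_comp_preimage (hs.inter measurableSet_Icc) (by fun_prop)

lemma memLp_top_id_betaMeasure (α : ℝ) : MemLp id ⊤ (_root_.betaMeasure α) := by
  refine memLp_top_of_bound aestronglyMeasurable_id 1 ?_
  filter_upwards [(withDensity_absolutelyContinuous _ _).ae_le
    (ae_restrict_mem measurableSet_Icc)] with x hx
  exact (abs_le.2 ⟨by linarith [hx.1], hx.2⟩ : |x| ≤ 1)

lemma integral_id_betaMeasure (α : ℝ) [IsProbabilityMeasure (_root_.betaMeasure α)] :
    ∫ x, x ∂_root_.betaMeasure α = 1 / 2 :=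
  integral_id_eq_half_of_map_one_sub_eq (betaMeasure_map_one_sub α)
    ((memLp_top_id_betaMeasure α).integrable le_top)

section Energy

variable {E : Type*} [NormedAddCommGroup E] [InnerProductSpace ℝ E] [CompleteSpace E]
  [MeasurableSpace E] [BorelSpace E]

lemma ProbabilityTheory.IndepFun.integral_norm_sub_sq {Ω : Type*} [MeasurableSpace Ω]
    {μ : Measure Ω} [IsFiniteMeasure μ] {X Y : Ω → E} (hXY : IndepFun X Y μ)
    (hX : MemLp X 2 μ) (hY : MemLp Y 2 μ) :
    ∫ ω, ‖X ω - Y ω‖ ^ 2 ∂μ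
      = ∫ ω, ‖X ω‖ ^ 2 ∂μ + ∫ ω, ‖Y ω‖ ^ 2 ∂μ - 2 * ⟪∫ ω, X ω ∂μ, ∫ ω, Y ω ∂μ⟫_ℝ := by
  have hX1 := hX.integrable one_le_two
  have hY1 := hY.integrable one_le_two
  have hinner : ∫ ω, ⟪X ω, Y ω⟫_ℝ ∂μ = ⟪∫ ω, X ω ∂μ, ∫ ω, Y ω ∂μ⟫_ℝ :=
    hXY.integral_bilin hX1 hY1 (innerSL ℝ)
  have hinner_int : Integrable (fun ω => ⟪X ω, Y ω⟫_ℝ) μ :=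
    hXY.integrable_bilin hX1 hY1 (innerSL ℝ)
  have hX2 : Integrable (fun ω => ‖X ω‖ ^ 2) μ := hX.norm.integrable_sq
  have hX2_inner : Integrable (fun ω => ‖X ω‖ ^ 2 - 2 * ⟪X ω, Y ω⟫_ℝ) μ :=
    hX2.sub (hinner_int.const_mul 2)
  simp_rw [norm_sub_sq_real]
  rw [integral_add hX2_inner hY.norm.integrable_sq, integral_sub hX2 (hinner_int.const_mul 2),
    integral_const_mul, hinner]
  ring

lemma integral_norm_sub_sq_prod (P Q : Measure E) [IsProbabilityMeasure P]
    [IsProbabilityMeasure Q] (hP : MemLp id 2 P) (hQ : MemLp id 2 Q) :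
    ∫ p, ‖p.1 - p.2‖ ^ 2 ∂(P.prod Q)
      = ∫ x, ‖x‖ ^ 2 ∂P + ∫ y, ‖y‖ ^ 2 ∂Q - 2 * ⟪∫ x, x ∂P, ∫ y, y ∂Q⟫_ℝ := by
  have h := (indepFun_prod (μ := P) (ν := Q) measurable_id measurable_id).integral_norm_sub_sq
    (hP.comp_fst Q) (hQ.comp_snd P)
  simpa only [integral_fun_fst (fun x : E => ‖x‖ ^ 2), integral_fun_snd (fun x : E => ‖x‖ ^ 2),
    integral_fun_fst (fun x : E => x), integral_fun_snd (fun x : E => x), id_eq, probReal_univ,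
    one_smul] using h

end Energy

lemma energyDistSq_eq_two_mul_norm_sub_sq {d : ℕ} (P Q : Measure (EuclideanSpace ℝ (Fin d)))
    [IsProbabilityMeasure P] [IsProbabilityMeasure Q] (hP : MemLp id 2 P) (hQ : MemLp id 2 Q) :
    energyDistSq P Q = 2 * ‖∫ x, x ∂P - ∫ y, y ∂Q‖ ^ 2 := by
  rw [energyDistSq, integral_norm_sub_sq_prod P Q hP hQ, integral_norm_sub_sq_prod P P hP hP,
    integral_norm_sub_sq_prod Q Q hQ hQ, norm_sub_sq_real, real_inner_self_eq_norm_sq,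
    real_inner_self_eq_norm_sq]
  ring

lemma energyDistSq_map_eq_two_mul_norm_sub_sq {d : ℕ} {Ω : Type*} [MeasurableSpace Ω]
    {μ : Measure Ω} [IsProbabilityMeasure μ] {X Y : Ω → EuclideanSpace ℝ (Fin d)}
    (hXm : AEMeasurable X μ) (hYm : AEMeasurable Y μ) (hX : MemLp X 2 μ) (hY : MemLp Y 2 μ) :
    energyDistSq (μ.map X) (μ.map Y) = 2 * ‖∫ ω, X ω ∂μ - ∫ ω, Y ω ∂μ‖ ^ 2 := by
  have := Measure.isProbabilityMeasure_map hXm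
  have := Measure.isProbabilityMeasure_map hYm
  rw [energyDistSq_eq_two_mul_norm_sub_sq _ _
    ((memLp_map_measure_iff aestronglyMeasurable_id hXm).2 hX)
    ((memLp_map_measure_iff aestronglyMeasurable_id hYm).2 hY),
    integral_id_map hXm, integral_id_map hYm]

section Interpolation

variable {Ω E : Type*} [MeasurableSpace Ω] {μ : Measure Ω} [NormedAddCommGroup E]
  [NormedSpace ℝ E] {L : Ω → ℝ} {X Y : Ω → E}

lemma memLp_smul_add_one_sub_smul {p : ENNReal} (hL : MemLp L ⊤ μ) (hX : MemLp X p μ)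
    (hY : MemLp Y p μ) : MemLp (fun ω => L ω • X ω + (1 - L ω) • Y ω) p μ :=
  (hX.smul hL).add (hY.smul ((memLp_top_const 1).sub hL))

lemma integral_smul_add_one_sub_smul [CompleteSpace E] [MeasurableSpace E] [BorelSpace E]
    [IsProbabilityMeasure μ] (hL : Integrable L μ) (hX : Integrable X μ) (hY : Integrable Y μ)
    (hind : IndepFun L (fun ω => (X ω, Y ω)) μ) :
    ∫ ω, L ω • X ω + (1 - L ω) • Y ω ∂μ
      = (∫ ω, L ω ∂μ) • ∫ ω, X ω ∂μ + (1 - ∫ ω, L ω ∂μ) • ∫ ω, Y ω ∂μ := by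
  have hLX : IndepFun L X μ := hind.comp measurable_id measurable_fst
  have hLY : IndepFun (fun ω => 1 - L ω) Y μ := hind.comp (by fun_prop) measurable_snd
  have hL' : Integrable (fun ω => 1 - L ω) μ := (integrable_const 1).sub hL
  rw [integral_add (hLX.integrable_smul hL hX) (hLY.integrable_smul hL' hY),
    hLX.integral_fun_smul_eq_smul_integral hL.1 hX.1,
    hLY.integral_fun_smul_eq_smul_integral hL'.1 hY.1, integral_sub (integrable_const 1) hL,
    integral_const, probReal_univ, one_smul]

end Interpolation

theorem energyDistSq_interpolated_eq_quarter_general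
    {d : ℕ} (α : ℝ)
    (Pl Pu : Measure (EuclideanSpace ℝ (Fin d)))
    [IsProbabilityMeasure Pl] [IsProbabilityMeasure Pu]
    (hPl2 : MemLp (id : EuclideanSpace ℝ (Fin d) → EuclideanSpace ℝ (Fin d)) 2 Pl)
    (hPu2 : MemLp (id : EuclideanSpace ℝ (Fin d) → EuclideanSpace ℝ (Fin d)) 2 Pu)
    {Ω : Type*} [MeasurableSpace Ω] (μ : Measure Ω) [IsProbabilityMeasure μ]
    (Xl Xu : Ω → EuclideanSpace ℝ (Fin d)) (L : Ω → ℝ)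
    (hXlmeas : Measurable Xl) (hXumeas : Measurable Xu) (hLmeas : Measurable L)
    (hXlLaw : μ.map Xl = Pl) (hXuLaw : μ.map Xu = Pu) (hLLaw : μ.map L = _root_.betaMeasure α)
    (hindep₂ : IndepFun L (fun ω => (Xl ω, Xu ω)) μ) :
    energyDistSq (μ.map (fun ω => L ω • Xl ω + (1 - L ω) • Xu ω)) Pu
      = (1 / 4) * energyDistSq Pl Pu := by
  subst hXlLaw hXuLaw
  have : IsProbabilityMeasure (_root_.betaMeasure α) :=
    hLLaw ▸ Measure.isProbabilityMeasure_map hLmeas.aemeasurable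
  have hL : MemLp L ⊤ μ :=
    (hLLaw ▸ memLp_top_id_betaMeasure α).comp_of_map hLmeas.aemeasurable
  have hL_mean : ∫ ω, L ω ∂μ = 1 / 2 := by
    rw [← integral_id_map hLmeas.aemeasurable, hLLaw, integral_id_betaMeasure]
  have hXl : MemLp Xl 2 μ := hPl2.comp_of_map hXlmeas.aemeasurable
  have hXu : MemLp Xu 2 μ := hPu2.comp_of_map hXumeas.aemeasurable
  rw [energyDistSq_map_eq_two_mul_norm_sub_sq (by fun_prop) hXumeas.aemeasurable
      (memLp_smul_add_one_sub_smul hL hXl hXu) hXu,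
    energyDistSq_map_eq_two_mul_norm_sub_sq hXlmeas.aemeasurable hXumeas.aemeasurable hXl hXu,
    integral_smul_add_one_sub_smul (hL.integrable le_top) (hXl.integrable one_le_two)
      (hXu.integrable one_le_two) hindep₂, hL_mean]
  set a := ∫ ω, Xl ω ∂μ
  set b := ∫ ω, Xu ω ∂μ
  rw [show (1 / 2 : ℝ) • a + (1 - 1 / 2 : ℝ) • b - b = (1 / 2 : ℝ) • (a - b) by module,
    norm_smul]
  norm_num
  ring

/-- Let `P_l, P_u` be Borel probability measures on `ℝ^d` with finite second
moments, let `X^l ~ P_l`, `X^u ~ P_u` and `λ ~ β(α, α)` be mutually independent, and let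
`P̃` be the law of `λ • X^l + (1 − λ) • X^u`. Then `J²(P̃, P_u) = (1/4) J²(P_l, P_u)`. -/
theorem energyDistSq_interpolated_eq_quarter
    {d : ℕ} (α : ℝ) (hα : 0 < α)
    (Pl Pu : Measure (EuclideanSpace ℝ (Fin d)))
    [IsProbabilityMeasure Pl] [IsProbabilityMeasure Pu]
    (hPl2 : MemLp (id : EuclideanSpace ℝ (Fin d) → EuclideanSpace ℝ (Fin d)) 2 Pl)
    (hPu2 : MemLp (id : EuclideanSpace ℝ (Fin d) → EuclideanSpace ℝ (Fin d)) 2 Pu)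
    {Ω : Type*} [MeasurableSpace Ω] (μ : Measure Ω) [IsProbabilityMeasure μ]
    (Xl Xu : Ω → EuclideanSpace ℝ (Fin d)) (L : Ω → ℝ)
    (hXlmeas : Measurable Xl) (hXumeas : Measurable Xu) (hLmeas : Measurable L)
    (hXlLaw : μ.map Xl = Pl) (hXuLaw : μ.map Xu = Pu) (hLLaw : μ.map L = _root_.betaMeasure α)
    (hindep₁ : IndepFun Xl Xu μ)
    (hindep₂ : IndepFun L (fun ω => (Xl ω, Xu ω)) μ) :
    energyDistSq (μ.map (fun ω => L ω • Xl ω + (1 - L ω) • Xu ω)) Pu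
      = (1 / 4) * energyDistSq Pl Pu :=
  energyDistSq_interpolated_eq_quarter_general α Pl Pu hPl2 hPu2 μ Xl Xu L hXlmeas hXumeas hLmeas
    hXlLaw hXuLaw hLLaw hindep₂
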